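/- Let X be a dendroid. If there exists a countable set Q ⊂ X which intersects every arc in X, then X \ E(X) is a countable union of arcs, where E(X) is the endpoint set of X. -/

import Mathlib

open Set Filter Topology

/-- The Euclidean plane. -/
abbrev Plane := EuclideanSpace ℝ (Fin 2)

section Defs

variable {α : Type*} [TopologicalSpace α]

/-- `A` is an arc with endpoints `a` and `b`: a homeomorphic image of `[0,1]`
sending `0 ↦ a` and `1 ↦ b`. -/
def IsArcWithEndpoints (A : Set α) (a b : α) : Prop :=
  ∃ f : ℝ → α, ContinuousOn f (Set.Icc 0 1) ∧ Set.InjOn f (Set.Icc 0 1) ∧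
    f '' (Set.Icc 0 1) = A ∧ f 0 = a ∧ f 1 = b

/-- `A` is an arc. -/
def IsArc (A : Set α) : Prop := ∃ a b, IsArcWithEndpoints A a b

/-- Every two distinct points of `X` are joined by an arc inside `X`. -/
def ArcwiseConnected (X : Set α) : Prop :=
  ∀ x ∈ X, ∀ y ∈ X, x ≠ y → ∃ A, A ⊆ X ∧ IsArcWithEndpoints A x y

/-- Every two subcontinua of `X` have connected intersection. -/
def HereditarilyUnicoherent (X : Set α) : Prop :=
  ∀ K L : Set α, K ⊆ X → L ⊆ X → IsCompact K → IsConnected K →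
    IsCompact L → IsConnected L → IsPreconnected (K ∩ L)

/-- A dendroid: a hereditarily unicoherent, arcwise connected continuum. -/
def IsDendroid (X : Set α) : Prop :=
  IsCompact X ∧ IsConnected X ∧ HereditarilyUnicoherent X ∧ ArcwiseConnected X

/-- The set of endpoints of `X`: points that are endpoints of every arc in `X`
containing them. -/
def Endpoints (X : Set α) : Set α :=
  {e | e ∈ X ∧ ∀ A : Set α, A ⊆ X → IsArc A → e ∈ A → ∃ b, IsArcWithEndpoints A e b}

/-- `X` is Suslinian: every collection of pairwise-disjoint non-degenerate
subcontinua of `X` is countable. -/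
def IsSuslinian (X : Set α) : Prop :=
  ∀ S : Set (Set α), (∀ K ∈ S, K ⊆ X ∧ IsCompact K ∧ IsConnected K ∧ K.Nontrivial) →
    S.PairwiseDisjoint id → S.Countable

/-- The arc component of `x` inside the set `S`. -/
def arcComponentIn (S : Set α) (x : α) : Set α :=
  {y | y ∈ S ∧ (y = x ∨ ∃ A, A ⊆ S ∧ IsArcWithEndpoints A x y)}

/-- The collection of arc components of `X \ {x}`; its cardinality is the order of `x`. -/
def orderComponents (X : Set α) (x : α) : Set (Set α) :=
  {C | ∃ y ∈ X \ {x}, C = arcComponentIn (X \ {x}) y}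

/-- Ramification points of `X`: points of order at least 3. -/
def RamificationPoints (X : Set α) : Set α :=
  {x | x ∈ X ∧ 3 ≤ (orderComponents X x).encard}

/-- `A` is a clopen subset of the subspace `Y`. -/
def IsClopenIn (Y A : Set α) : Prop :=
  A ⊆ Y ∧ (∃ U, IsOpen U ∧ A = Y ∩ U) ∧ (∃ C, IsClosed C ∧ A = Y ∩ C)

/-- The quasicomponent of `x` in the subspace `Y`: the intersection of all
clopen subsets of `Y` containing `x`. -/
def quasicomponentIn (Y : Set α) (x : α) : Set α :=
  {y ∈ Y | ∀ A : Set α, IsClopenIn Y A → x ∈ A → y ∈ A}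

/-- `Y` is hereditarily disconnected: it contains no non-degenerate connected subset. -/
def HereditarilyDisconnected (Y : Set α) : Prop :=
  ∀ S : Set α, S ⊆ Y → IsPreconnected S → S.Subsingleton

end Defs

/-- The point `x` of `X` is (arcwise) accessible from `ℝ² \ X`. -/
def AccessiblePoint (X : Set Plane) (x : Plane) : Prop :=
  ∃ A : Set Plane, IsArc A ∧ A ∩ X = {x}

/-- `σ` separates the points `b` and `d` in the plane: no connected subset of the
complement of `σ` contains both. -/
def SeparatesPoints (σ : Set Plane) (b d : Plane) : Prop :=
  b ∉ σ ∧ d ∉ σ ∧ ∀ K : Set Plane, K ⊆ σᶜ → IsPreconnected K → b ∈ K → d ∉ K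

/-- A simple closed curve in the plane: the image of a period-1 parametrization
injective on `[0,1)`. -/
def IsSimpleClosedCurve (O : Set Plane) : Prop :=
  ∃ f : ℝ → Plane, Continuous f ∧ Function.Periodic f 1 ∧
    Set.InjOn f (Set.Ico 0 1) ∧ f '' (Set.Ico 0 1) = O

/-- The dendroid `X` is smooth at `p`: there is a choice `arcTo x` of the unique arc
from `x` to `p` (reduced to `{p}` for `x = p`) such that `xₙ → x` in `X` implies
`arcTo xₙ → arcTo x` in the Hausdorff distance. -/
def DendroidSmoothAt (X : Set Plane) (p : Plane) : Prop :=
  p ∈ X ∧ ∃ arcTo : Plane → Set Plane,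
    arcTo p = {p} ∧
    (∀ x ∈ X, x ≠ p → arcTo x ⊆ X ∧ IsArcWithEndpoints (arcTo x) x p) ∧
    (∀ (xs : ℕ → Plane) (x : Plane), (∀ n, xs n ∈ X) → x ∈ X →
      Filter.Tendsto xs Filter.atTop (nhds x) →
      Filter.Tendsto (fun n => EMetric.hausdorffEdist (arcTo (xs n)) (arcTo x))
        Filter.atTop (nhds 0))

/-- A space is zero-dimensional if it has a basis of clopen sets. -/
def IsZeroDimensionalSpace (β : Type*) [TopologicalSpace β] : Prop :=
  ∀ (x : β) (U : Set β), IsOpen U → x ∈ U → ∃ V : Set β, IsClopen V ∧ x ∈ V ∧ V ⊆ U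

/-- A space is almost zero-dimensional if it has a neighborhood basis of sets
which are intersections of clopen sets. -/
def IsAlmostZeroDimensionalSpace (β : Type*) [TopologicalSpace β] : Prop :=
  ∀ (x : β) (U : Set β), IsOpen U → x ∈ U →
    ∃ V : Set β, V ∈ nhds x ∧ V ⊆ U ∧
      ∃ 𝒞 : Set (Set β), (∀ C ∈ 𝒞, IsClopen C) ∧ V = ⋂₀ 𝒞

/-- The union of `W` with all of the bounded connected components of its complement. -/
def boundedComplementaryFill (W : Set Plane) : Set Plane :=
  W ∪ ⋃₀ {K | (∃ x ∈ Wᶜ, K = connectedComponentIn Wᶜ x) ∧ Bornology.IsBounded K}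

/-- A Bellamy dendroid: a (non-degenerate) smooth plane dendroid whose endpoint
set is connected. -/
def IsBellamyDendroid (K : Set Plane) : Prop :=
  IsDendroid K ∧ K.Nontrivial ∧ (∃ q, DendroidSmoothAt K q) ∧ IsConnected (Endpoints K)

/-- The middle-thirds Cantor set. -/
noncomputable def cantorC : Set ℝ :=
  {x | ∃ a : ℕ → Bool, x = ∑' i, (if a i then (2 : ℝ) else 0) / 3 ^ (i + 1)}

/-! A point of `X \ E(X)` is an interior point of some arc of `X`; since `Q` meets every arc,
there are points of `Q` on both sides of it along that arc, and the subarc between them consists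
of interior points only. So `X \ E(X)` is the union of the arcs with both endpoints in `Q` that
avoid `E(X)`. By hereditary unicoherence an arc of `X` is determined by its endpoints, so there
are only countably many such arcs. -/

namespace IsArcWithEndpoints

variable {α : Type*} [TopologicalSpace α] {A : Set α} {a b : α}

theorem symm (h : IsArcWithEndpoints A a b) : IsArcWithEndpoints A b a := by
  obtain ⟨f, hfc, hfi, rfl, rfl, rfl⟩ := h
  have hmaps : MapsTo (fun s : ℝ => 1 - s) (Icc 0 1) (Icc 0 1) := fun s hs =>
    ⟨by linarith [hs.2], by linarith [hs.1]⟩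
  refine ⟨fun s => f (1 - s), hfc.comp (continuous_const.sub continuous_id).continuousOn hmaps,
    fun s hs s' hs' he => by linarith [hfi (hmaps hs) (hmaps hs') he], ?_, by simp, by simp⟩
  rw [← image_image f, image_const_sub_Icc, sub_zero, sub_self]

theorem isCompact (h : IsArcWithEndpoints A a b) : IsCompact A := by
  obtain ⟨f, hfc, -, rfl, -⟩ := h
  exact isCompact_Icc.image_of_continuousOn hfc

theorem isConnected (h : IsArcWithEndpoints A a b) : IsConnected A := by
  obtain ⟨f, hfc, -, rfl, -⟩ := h
  exact isConnected_Icc zero_le_one |>.image f hfc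

theorem left_mem (h : IsArcWithEndpoints A a b) : a ∈ A := by
  obtain ⟨f, -, -, rfl, rfl, -⟩ := h
  exact mem_image_of_mem f (left_mem_Icc.2 zero_le_one)

theorem right_mem (h : IsArcWithEndpoints A a b) : b ∈ A :=
  h.symm.left_mem

theorem image_Icc {f : ℝ → α} (hfc : ContinuousOn f (Icc 0 1)) (hfi : InjOn f (Icc 0 1))
    {s t : ℝ} (hs : 0 ≤ s) (hst : s < t) (ht : t ≤ 1) :
    IsArcWithEndpoints (f '' Icc s t) (f s) (f t) := by
  have hsub : Icc s t ⊆ Icc 0 1 := Icc_subset_Icc hs ht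
  have hφ : (fun u : ℝ => (t - s) * u + s) '' Icc 0 1 = Icc s t := by
    rw [image_affine_Icc' (sub_pos.2 hst)]
    simp
  refine ⟨fun u => f ((t - s) * u + s), ?_, ?_, ?_, by simp, by simp⟩
  · exact hfc.comp (by fun_prop) fun u hu => hsub (hφ ▸ mem_image_of_mem _ hu)
  · intro u hu u' hu' he
    have := hfi (hsub (hφ ▸ mem_image_of_mem _ hu)) (hsub (hφ ▸ mem_image_of_mem _ hu')) he
    exact mul_left_cancel₀ (sub_pos.2 hst).ne' (by linarith)
  · rw [← image_image f (fun u : ℝ => (t - s) * u + s), hφ]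

variable [T2Space α]

theorem subset_of_isPreconnected (h : IsArcWithEndpoints A a b) {C : Set α}
    (hC : IsPreconnected C) (hCA : C ⊆ A) (ha : a ∈ C) (hb : b ∈ C) : A ⊆ C := by
  obtain ⟨f, hfc, hfi, rfl, rfl, rfl⟩ := h
  -- Pull `C` back to `[0, 1]` along the parametrization, a closed embedding.
  set g : Icc (0 : ℝ) 1 → α := (Icc 0 1).domRestrict f
  have hg : Continuous g := hfc.domRestrict
  have hpre : IsPreconnected (((↑) : Icc (0 : ℝ) 1 → ℝ) '' (g ⁻¹' C)) :=
    (hC.preimage_of_isClosedMap hfi.injective hg.isClosedMap (by rwa [range_domRestrict])).image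
      _ continuous_subtype_val.continuousOn
  rintro _ ⟨t, ht, rfl⟩
  obtain ⟨s, hsC, rfl⟩ := hpre.Icc_subset
    ⟨⟨0, left_mem_Icc.2 zero_le_one⟩, ha, rfl⟩ ⟨⟨1, right_mem_Icc.2 zero_le_one⟩, hb, rfl⟩ ht
  exact hsC

theorem eq_or_eq_of_isArcWithEndpoints (h : IsArcWithEndpoints A a b) {x c : α}
    (hx : IsArcWithEndpoints A x c) : x = a ∨ x = b := by
  by_contra! hne
  obtain ⟨g, hgc, hgi, hgA, hg0, -⟩ := hx
  have h01 : Ioc (0 : ℝ) 1 ⊆ Icc 0 1 := Ioc_subset_Icc_self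
  have hmem : ∀ y ∈ A, y ≠ x → y ∈ g '' Ioc 0 1 := by
    rintro y hy hyx
    obtain ⟨s, hs, rfl⟩ := hgA ▸ hy
    exact ⟨s, ⟨hs.1.lt_of_ne (by rintro rfl; exact hyx hg0), hs.2⟩, rfl⟩
  have hAC := h.subset_of_isPreconnected (isPreconnected_Ioc.image g (hgc.mono h01))
    (hgA ▸ image_mono h01) (hmem a h.left_mem (Ne.symm hne.1))
    (hmem b h.right_mem (Ne.symm hne.2))
  obtain ⟨s, hs, hsx⟩ := hAC (hgA ▸ hg0 ▸ mem_image_of_mem g (left_mem_Icc.2 zero_le_one))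
  exact hs.1.ne' (hgi (h01 hs) (left_mem_Icc.2 zero_le_one) (hsx.trans hg0.symm))

end IsArcWithEndpoints

section Dendroid

variable {α : Type*} [TopologicalSpace α] {X A : Set α} {a b x : α}

theorem HereditarilyUnicoherent.eq_of_isArcWithEndpoints [T2Space α]
    (hX : HereditarilyUnicoherent X) {B : Set α} (hAX : A ⊆ X) (hBX : B ⊆ X)
    (hA : IsArcWithEndpoints A a b) (hB : IsArcWithEndpoints B a b) : A = B := by
  have hAB := hX A B hAX hBX hA.isCompact hA.isConnected hB.isCompact hB.isConnected
  have hBA : IsPreconnected (B ∩ A) := inter_comm A B ▸ hAB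
  exact ((hA.subset_of_isPreconnected hAB inter_subset_left ⟨hA.left_mem, hB.left_mem⟩
      ⟨hA.right_mem, hB.right_mem⟩).trans inter_subset_right).antisymm
    ((hB.subset_of_isPreconnected hBA inter_subset_left ⟨hB.left_mem, hA.left_mem⟩
      ⟨hB.right_mem, hA.right_mem⟩).trans inter_subset_right)

theorem apply_mem_diff_endpoints [T2Space α] {f : ℝ → α} (hfc : ContinuousOn f (Icc 0 1))
    (hfi : InjOn f (Icc 0 1)) (hfX : f '' Icc 0 1 ⊆ X) {u : ℝ} (hu : u ∈ Ioo 0 1) :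
    f u ∈ X \ Endpoints X := by
  have hu' : u ∈ Icc 0 1 := Ioo_subset_Icc_self hu
  refine ⟨hfX (mem_image_of_mem f hu'), fun hE => ?_⟩
  have hA : IsArcWithEndpoints (f '' Icc 0 1) (f 0) (f 1) := ⟨f, hfc, hfi, rfl, rfl, rfl⟩
  obtain ⟨c, hc⟩ := hE.2 _ hfX ⟨_, _, hA⟩ (mem_image_of_mem f hu')
  rcases hA.eq_or_eq_of_isArcWithEndpoints hc with h | h
  · exact hu.1.ne' (hfi hu' (left_mem_Icc.2 zero_le_one) h)
  · exact hu.2.ne (hfi hu' (right_mem_Icc.2 zero_le_one) h)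

theorem exists_apply_eq_of_mem_diff_endpoints (hx : x ∈ X \ Endpoints X) :
    ∃ f : ℝ → α, ContinuousOn f (Icc 0 1) ∧ InjOn f (Icc 0 1) ∧ f '' Icc 0 1 ⊆ X ∧
      ∃ t ∈ Ioo 0 1, f t = x := by
  obtain ⟨hxX, hxE⟩ := hx
  have hnot : ¬ ∀ A : Set α, A ⊆ X → IsArc A → x ∈ A → ∃ c, IsArcWithEndpoints A x c :=
    fun h => hxE ⟨hxX, h⟩
  push Not at hnot
  obtain ⟨_, hAX, ⟨a, b, hA⟩, hxA, hno⟩ := hnot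
  obtain ⟨f, hfc, hfi, rfl, rfl, rfl⟩ := id hA
  obtain ⟨t, ht, rfl⟩ := hxA
  refine ⟨f, hfc, hfi, hAX, t, ⟨ht.1.lt_of_ne ?_, ht.2.lt_of_ne ?_⟩, rfl⟩
  · rintro rfl
    exact hno _ hA
  · rintro rfl
    exact hno _ hA.symm

theorem exists_mem_Ioo_apply_mem {Q : Set α}
    (hQ : ∀ A : Set α, A ⊆ X → IsArc A → (Q ∩ A).Nonempty) {f : ℝ → α}
    (hfc : ContinuousOn f (Icc 0 1)) (hfi : InjOn f (Icc 0 1)) (hfX : f '' Icc 0 1 ⊆ X)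
    {s t : ℝ} (hs : 0 ≤ s) (hst : s < t) (ht : t ≤ 1) : ∃ u ∈ Ioo s t, f u ∈ Q := by
  have hsub : Icc ((2 * s + t) / 3) ((s + 2 * t) / 3) ⊆ Icc 0 1 :=
    Icc_subset_Icc (by linarith) (by linarith)
  obtain ⟨_, hyQ, u, hu, rfl⟩ := hQ _ ((image_mono hsub).trans hfX)
    ⟨_, _, IsArcWithEndpoints.image_Icc hfc hfi (by linarith) (by linarith) (by linarith)⟩
  exact ⟨u, ⟨by linarith [hu.1], by linarith [hu.2]⟩, hyQ⟩

end Dendroid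

theorem stmt_7_general {α : Type*} [MetricSpace α] (X : Set α) (hX : IsDendroid X)
    (Q : Set α) (hQc : Q.Countable)
    (hQ : ∀ A : Set α, A ⊆ X → IsArc A → (Q ∩ A).Nonempty) :
    ∃ S : Set (Set α), S.Countable ∧ (∀ A ∈ S, IsArc A) ∧
      X \ Endpoints X = ⋃₀ S := by
  refine ⟨{A | A ⊆ X \ Endpoints X ∧ ∃ p ∈ Q, ∃ q ∈ Q, IsArcWithEndpoints A p q}, ?_,
    fun A ⟨_, p, _, q, _, hA⟩ => ⟨p, q, hA⟩, subset_antisymm ?_ (sUnion_subset fun A hA => hA.1)⟩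
  · refine (hQc.biUnion fun p _ => hQc.biUnion fun q _ =>
      Subsingleton.countable (s := {A | A ⊆ X ∧ IsArcWithEndpoints A p q}) ?_).mono ?_
    · rintro A ⟨hAX, hA⟩ B ⟨hBX, hB⟩
      exact hX.2.2.1.eq_of_isArcWithEndpoints hAX hBX hA hB
    · rintro A ⟨hAX, p, hp, q, hq, hA⟩
      exact mem_biUnion hp (mem_biUnion hq ⟨hAX.trans sdiff_subset, hA⟩)
  · intro x hx
    obtain ⟨f, hfc, hfi, hfX, t, ht, rfl⟩ := exists_apply_eq_of_mem_diff_endpoints hx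
    obtain ⟨s₁, hs₁, hq₁⟩ := exists_mem_Ioo_apply_mem hQ hfc hfi hfX le_rfl ht.1 ht.2.le
    obtain ⟨s₂, hs₂, hq₂⟩ := exists_mem_Ioo_apply_mem hQ hfc hfi hfX ht.1.le ht.2 le_rfl
    refine ⟨f '' Icc s₁ s₂, ⟨?_, _, hq₁, _, hq₂, ?_⟩, mem_image_of_mem f ⟨hs₁.2.le, hs₂.1.le⟩⟩
    · rintro _ ⟨u, hu, rfl⟩
      exact apply_mem_diff_endpoints hfc hfi hfX
        ⟨hs₁.1.trans_le hu.1, hu.2.trans_lt hs₂.2⟩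
    · exact IsArcWithEndpoints.image_Icc hfc hfi hs₁.1.le (hs₁.2.trans hs₂.1) hs₂.2.le

/-- Proposition 1, (1) ⇒ (2), main step. -/
theorem stmt_7 {α : Type*} [MetricSpace α] (X : Set α) (hX : IsDendroid X)
    (Q : Set α) (hQc : Q.Countable) (hQX : Q ⊆ X)
    (hQ : ∀ A : Set α, A ⊆ X → IsArc A → (Q ∩ A).Nonempty) :
    ∃ S : Set (Set α), S.Countable ∧ (∀ A ∈ S, IsArc A) ∧
      X \ Endpoints X = ⋃₀ S :=
  stmt_7_general X hX Q hQc hQ
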